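/- arXiv:1910.03656 — 5 statements merged into one kernel-verified Lean document; each statement's English description precedes it below -/
import Mathlib

section
/- Coend lenses over a symmetric monoidal category C form a category: composition of equivalence classes [A, v, u] : (X,S)→(Y,R) and [A', v', u'] : (Y,R)→(Z,Q) given by [A⊗A', (v'⊗id_A)∘v, u∘(id_A⊗u')] is well-defined on equivalence classes, associative, and has identities [I, ρ⁻¹ or unit-coherence of id_X, λ on id_S]. -/
open CategoryTheory MonoidalCategory

variable {C : Type u} [Category.{v} C] [MonoidalCategory C]

/-- A representative of a coend lens `(X,S) → (Y,R)`: a bound object `A`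
together with `v : X ⟶ A ⊗ Y` and `u : A ⊗ R ⟶ S`. -/
structure LensRep (X S Y R : C) where
  A : C
  v : X ⟶ A ⊗ Y
  u : A ⊗ R ⟶ S

/-- The sliding relation generating the coend equivalence:
`((f ⊗ 𝟙) ∘ v, u) ∼ (v, u ∘ (f ⊗ 𝟙))`. -/
inductive LensRel {X S Y R : C} : LensRep X S Y R → LensRep X S Y R → Prop
  | slide {A B : C} (f : A ⟶ B) (v : X ⟶ A ⊗ Y) (u : B ⊗ R ⟶ S) :
      LensRel ⟨B, v ≫ (f ▷ Y), u⟩ ⟨A, v, (f ▷ R) ≫ u⟩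

/-- A coend lens is an equivalence class of representatives. -/
def CoendLens (X S Y R : C) : Type _ := Quot (LensRel (X := X) (S := S) (Y := Y) (R := R))

/-- Composition on representatives:
`[A', v', u'] ∘ [A, v, u] = [A ⊗ A', (v' ⊗ id_A) ∘ v, u ∘ (id_A ⊗ u')]`. -/
def LensRep.comp {X S Y R Z Q : C} (l : LensRep X S Y R) (m : LensRep Y R Z Q) :
    LensRep X S Z Q where
  A := l.A ⊗ m.A
  v := l.v ≫ (l.A ◁ m.v) ≫ (α_ l.A m.A Z).inv
  u := (α_ l.A m.A Q).hom ≫ (l.A ◁ m.u) ≫ l.u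

/-- The identity representative `[I, λ⁻¹, λ]`. -/
def LensRep.id (X S : C) : LensRep X S X S where
  A := 𝟙_ C
  v := (λ_ X).inv
  u := (λ_ S).hom


lemma slide_eq {X S Y R : C} {A B : C} (f : A ⟶ B) {v₁ : X ⟶ B ⊗ Y} {u₁ : B ⊗ R ⟶ S}
    {v₂ : X ⟶ A ⊗ Y} {u₂ : A ⊗ R ⟶ S} (hv : v₁ = v₂ ≫ f ▷ Y) (hu : u₂ = f ▷ R ≫ u₁) :
    Quot.mk LensRel ⟨B, v₁, u₁⟩ = Quot.mk LensRel ⟨A, v₂, u₂⟩ := by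
  subst hv hu; exact Quot.sound (LensRel.slide f v₂ u₁)

lemma comp_wd_right {X S Y R Z Q : C} (l : LensRep X S Y R) {m m' : LensRep Y R Z Q}
    (h : LensRel m m') : Quot.mk LensRel (l.comp m) = Quot.mk LensRel (l.comp m') := by
  obtain ⟨f, v, u⟩ := h
  refine slide_eq (l.A ◁ f) ?_ ?_ <;> simp [LensRep.comp]

lemma comp_wd_left {X S Y R Z Q : C} {l l' : LensRep X S Y R} (m : LensRep Y R Z Q)
    (h : LensRel l l') : Quot.mk LensRel (l.comp m) = Quot.mk LensRel (l'.comp m) := by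
  obtain ⟨f, v, u⟩ := h
  refine slide_eq (f ▷ m.A) ?_ ?_
  · simp only [LensRep.comp, Category.assoc, ← associator_inv_naturality_left,
      whisker_exchange_assoc]
  · simp only [LensRep.comp, Category.assoc, associator_naturality_left_assoc,
      ← whisker_exchange_assoc]

lemma comp_assoc' {X S Y R Z Q W T : C} (l : LensRep X S Y R) (m : LensRep Y R Z Q)
    (n : LensRep Z Q W T) :
    Quot.mk LensRel ((l.comp m).comp n) = Quot.mk LensRel (l.comp (m.comp n)) := by
  refine slide_eq (α_ l.A m.A n.A).inv ?_ ?_ <;>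
    simp [LensRep.comp, whisker_exchange]

lemma id_comp' {X S Y R : C} (l : LensRep X S Y R) :
    Quot.mk LensRel ((LensRep.id X S).comp l) = Quot.mk LensRel l := by
  have : l = ⟨l.A, l.v, l.u⟩ := rfl
  rw [this]
  refine slide_eq (λ_ l.A).inv ?_ ?_ <;> simp [LensRep.comp, LensRep.id]

lemma comp_id' {X S Y R : C} (l : LensRep X S Y R) :
    Quot.mk LensRel (l.comp (LensRep.id Y R)) = Quot.mk LensRel l := by
  have : l = ⟨l.A, l.v, l.u⟩ := rfl
  rw [this]
  refine slide_eq (ρ_ l.A).inv ?_ ?_ <;> simp [LensRep.comp, LensRep.id]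

/-- Coend lenses over a symmetric monoidal category form a category:
the composition of representatives descends to a well-defined, associative
operation on equivalence classes, with the classes of the identity
representatives as two-sided identities. -/
theorem coendLens_category (C : Type u) [Category.{v} C] [MonoidalCategory C]
    [SymmetricCategory C] :
    ∃ comp : ∀ (X S Y R Z Q : C),
        CoendLens X S Y R → CoendLens Y R Z Q → CoendLens X S Z Q,
      (∀ (X S Y R Z Q : C) (l : LensRep X S Y R) (m : LensRep Y R Z Q),
        comp X S Y R Z Q (Quot.mk _ l) (Quot.mk _ m) = Quot.mk _ (l.comp m)) ∧
      (∀ (X S Y R Z Q W T : C) (l : CoendLens X S Y R) (m : CoendLens Y R Z Q)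
          (n : CoendLens Z Q W T),
        comp X S Y R W T l (comp Y R Z Q W T m n) =
          comp X S Z Q W T (comp X S Y R Z Q l m) n) ∧
      (∀ (X S Y R : C) (l : CoendLens X S Y R),
        comp X S X S Y R (Quot.mk _ (LensRep.id X S)) l = l ∧
        comp X S Y R Y R l (Quot.mk _ (LensRep.id Y R)) = l) := by
  refine ⟨fun X S Y R Z Q =>
    Quot.lift (fun l => Quot.lift (fun m => Quot.mk _ (l.comp m))
        (fun _ _ h => comp_wd_right l h))
      (fun l₁ l₂ h => funext fun m =>
        Quot.ind (β := fun m =>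
            Quot.lift (fun m => Quot.mk _ (l₁.comp m)) (fun _ _ h => comp_wd_right l₁ h) m =
            Quot.lift (fun m => Quot.mk _ (l₂.comp m)) (fun _ _ h => comp_wd_right l₂ h) m)
          (fun m₀ => comp_wd_left m₀ h) m), ?_, ?_, ?_⟩
  · intros; rfl
  · intro X S Y R Z Q W T l m n
    induction l using Quot.ind with | _ l =>
    induction m using Quot.ind with | _ m =>
    induction n using Quot.ind with | _ n =>
    exact (comp_assoc' l m n).symm
  · intro X S Y R l
    induction l using Quot.ind with | _ l =>
    exact ⟨id_comp' l, comp_id' l⟩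
end

section
/- The tensor of coend lenses, defined on representatives by [A,v,u] ⊗ [A',v',u'] = [A⊗A', (id_A ⊗ s_{Y,A'} ⊗ id_{Y'}) ∘ (v ⊗ v'), (u ⊗ u') ∘ (id_A ⊗ s_{A',R} ⊗ id_{R'})], is well-defined on equivalence classes of coend lenses. -/
open CategoryTheory MonoidalCategory

variable {C : Type u} [Category.{v} C] [MonoidalCategory C]

variable [SymmetricCategory C]

/-- Tensor of representatives:
`[A,v,u] ⊗ [A',v',u'] =
 [A⊗A', (id ⊗ s ⊗ id) ∘ (v ⊗ v'), (u ⊗ u') ∘ (id ⊗ s ⊗ id)]`,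
where the middle interchanges are `tensorμ`, built from associators and the
symmetry `s`. -/
def LensRep.tensor {X S Y R X' S' Y' R' : C}
    (l : LensRep X S Y R) (l' : LensRep X' S' Y' R') :
    LensRep (X ⊗ X') (S ⊗ S') (Y ⊗ Y') (R ⊗ R') where
  A := l.A ⊗ l'.A
  v := (l.v ⊗ₘ l'.v) ≫ tensorμ l.A Y l'.A Y'
  u := tensorμ l.A l'.A R R' ≫ (l.u ⊗ₘ l'.u)

/-! A slide by `f` in the first factor and by `g` in the second becomes a single slide by
`f ⊗ g` of the tensor, because the interchange `tensorμ` is natural; taking `g` or `f` to be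
an identity shows that the tensor respects the generating relation in each variable. -/

theorem whiskerRight_tensorHom_whiskerRight_comp_tensorμ {A B A' B' : C} (f : A ⟶ B)
    (g : A' ⟶ B') (Y Y' : C) :
    (f ▷ Y ⊗ₘ g ▷ Y') ≫ tensorμ B Y B' Y' = tensorμ A Y A' Y' ≫ (f ⊗ₘ g) ▷ (Y ⊗ Y') := by
  simpa only [tensorHom_id, id_whiskerRight] using tensorμ_natural f (𝟙 Y) g (𝟙 Y')

namespace LensRel

variable {X S Y R X' S' Y' R' : C}

theorem tensor_slide {A B A' B' : C} (f : A ⟶ B) (g : A' ⟶ B') (v : X ⟶ A ⊗ Y)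
    (u : B ⊗ R ⟶ S) (v' : X' ⟶ A' ⊗ Y') (u' : B' ⊗ R' ⟶ S') :
    LensRel (LensRep.tensor ⟨B, v ≫ f ▷ Y, u⟩ ⟨B', v' ≫ g ▷ Y', u'⟩)
      (LensRep.tensor ⟨A, v, f ▷ R ≫ u⟩ ⟨A', v', g ▷ R' ≫ u'⟩) := by
  have hv : (v ≫ f ▷ Y ⊗ₘ v' ≫ g ▷ Y') ≫ tensorμ B Y B' Y' =
      ((v ⊗ₘ v') ≫ tensorμ A Y A' Y') ≫ (f ⊗ₘ g) ▷ (Y ⊗ Y') := by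
    rw [← tensorHom_comp_tensorHom, Category.assoc, Category.assoc,
      whiskerRight_tensorHom_whiskerRight_comp_tensorμ]
  have hu : tensorμ A A' R R' ≫ (f ▷ R ≫ u ⊗ₘ g ▷ R' ≫ u') =
      (f ⊗ₘ g) ▷ (R ⊗ R') ≫ tensorμ B B' R R' ≫ (u ⊗ₘ u') := by
    rw [tensorμ_natural_left_assoc, tensorHom_comp_tensorHom]
  have h := slide (f ⊗ₘ g) ((v ⊗ₘ v') ≫ tensorμ A Y A' Y') (tensorμ B B' R R' ≫ (u ⊗ₘ u'))
  rwa [← hv, ← hu] at h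

theorem tensor_left {l₁ l₂ : LensRep X S Y R} (h : LensRel l₁ l₂) (l : LensRep X' S' Y' R') :
    LensRel (l₁.tensor l) (l₂.tensor l) := by
  obtain ⟨f, v, u⟩ := h
  simpa using tensor_slide f (𝟙 l.A) v u l.v l.u

theorem tensor_right (l : LensRep X S Y R) {l₁ l₂ : LensRep X' S' Y' R'} (h : LensRel l₁ l₂) :
    LensRel (l.tensor l₁) (l.tensor l₂) := by
  obtain ⟨g, v', u'⟩ := h
  simpa using tensor_slide (𝟙 l.A) g l.v l.u v' u'

end LensRel

/-- The tensor of coend lenses is well defined on equivalence classes: there is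
an operation on coend lenses which on representatives is given by
`LensRep.tensor`. -/
theorem coendLens_tensor_well_defined (X S Y R X' S' Y' R' : C) :
    ∃ tens : CoendLens X S Y R → CoendLens X' S' Y' R' →
        CoendLens (X ⊗ X') (S ⊗ S') (Y ⊗ Y') (R ⊗ R'),
      ∀ (l : LensRep X S Y R) (l' : LensRep X' S' Y' R'),
        tens (Quot.mk _ l) (Quot.mk _ l') = Quot.mk _ (l.tensor l') :=
  ⟨Quot.lift₂ (fun l l' => Quot.mk _ (l.tensor l'))
    (fun l _ _ h => Quot.sound (h.tensor_right l)) (fun _ _ l h => Quot.sound (h.tensor_left l)),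
    fun _ _ => rfl⟩
end

section
/- When the monoidal structure on C is cartesian, the category of coend lenses over C is isomorphic to the category of concrete lenses over C (with morphisms (X,S)→(Y,R) given by pairs v : X → Y, u : X × R → S). -/
open CategoryTheory CategoryTheory.Limits

variable {C : Type u} [Category.{v} C] [HasFiniteProducts C]

/-- A representative of a coend lens `(X,S) → (Y,R)` over a cartesian monoidal
category: `A` with `v : X ⟶ A ⨯ Y` and `u : A ⨯ R ⟶ S`. -/
structure CartLensRep (X S Y R : C) where
  A : C
  v : X ⟶ A ⨯ Y
  u : A ⨯ R ⟶ S

/-- The sliding relation `((f × id) ∘ v, u) ∼ (v, u ∘ (f × id))`. -/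
inductive CartLensRel {X S Y R : C} : CartLensRep X S Y R → CartLensRep X S Y R → Prop
  | slide {A B : C} (f : A ⟶ B) (v : X ⟶ A ⨯ Y) (u : B ⨯ R ⟶ S) :
      CartLensRel ⟨B, v ≫ prod.map f (𝟙 Y), u⟩ ⟨A, v, prod.map f (𝟙 R) ≫ u⟩

/-- Coend lenses over a cartesian category. -/
def CartCoendLens (X S Y R : C) : Type _ :=
  Quot (CartLensRel (X := X) (S := S) (Y := Y) (R := R))

/-- Composition of coend-lens representatives over a cartesian category. -/
noncomputable def CartLensRep.comp {X S Y R Z Q : C}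
    (l : CartLensRep X S Y R) (m : CartLensRep Y R Z Q) : CartLensRep X S Z Q where
  A := l.A ⨯ m.A
  v := l.v ≫ prod.map (𝟙 l.A) m.v ≫ (prod.associator l.A m.A Z).inv
  u := (prod.associator l.A m.A Q).hom ≫ prod.map (𝟙 l.A) m.u ≫ l.u

/-- The identity coend-lens representative. -/
noncomputable def CartLensRep.id (X S : C) : CartLensRep X S X S where
  A := ⊤_ C
  v := prod.lift (terminal.from X) (𝟙 X)
  u := prod.snd

/-- A concrete lens `(X,S) → (Y,R)` over `C`: `v : X ⟶ Y`, `u : X ⨯ R ⟶ S`. -/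
structure CartConLens (X S Y R : C) where
  v : X ⟶ Y
  u : X ⨯ R ⟶ S

/-- Composition of concrete lenses over `C`. -/
noncomputable def CartConLens.comp {X S Y R Z Q : C}
    (l : CartConLens X S Y R) (m : CartConLens Y R Z Q) : CartConLens X S Z Q where
  v := l.v ≫ m.v
  u := prod.lift prod.fst (prod.map l.v (𝟙 Q) ≫ m.u) ≫ l.u

/-- The identity concrete lens over `C`. -/
noncomputable def CartConLens.id (X S : C) : CartConLens X S X S where
  v := 𝟙 X
  u := prod.snd

/-!
Over a cartesian category the residual `A` of a coend lens `(A, v, u)` carries no information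
beyond the map `v ≫ fst : X ⟶ A`: sliding along it moves every representative to one with
residual `X` and forward part `lift (𝟙 X) (v ≫ snd)`, i.e. to a concrete lens. Conversely,
reading off `(v ≫ snd, map (v ≫ fst) (𝟙 R) ≫ u)` is invariant under sliding, and it turns the
composite of coend lenses (residual `A ⨯ B`) into the composite of concrete lenses.
-/

attribute [local simp] prod.lift_fst prod.lift_snd prod.lift_fst_assoc prod.lift_snd_assoc

theorem CategoryTheory.Limits.prod.associator_hom_snd (A B Q : C) :
    (prod.associator A B Q).hom ≫ prod.snd = prod.map prod.snd (𝟙 Q) := by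
  ext <;> simp

section

variable {X S Y R : C}

noncomputable def CartLensRep.toCon (l : CartLensRep X S Y R) : CartConLens X S Y R where
  v := l.v ≫ prod.snd
  u := prod.map (l.v ≫ prod.fst) (𝟙 R) ≫ l.u

noncomputable def CartConLens.toRep (l : CartConLens X S Y R) : CartLensRep X S Y R where
  A := X
  v := prod.lift (𝟙 X) l.v
  u := l.u

theorem CartLensRep.toCon_eq_of_rel {l m : CartLensRep X S Y R} (h : CartLensRel l m) :
    l.toCon = m.toCon := by
  cases h
  simp [toCon, prod.map_map_assoc]

theorem CartConLens.toRep_toCon (l : CartConLens X S Y R) : l.toRep.toCon = l := by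
  simp [toRep, CartLensRep.toCon]

theorem CartLensRep.rel_toCon_toRep (l : CartLensRep X S Y R) : CartLensRel l l.toCon.toRep := by
  have hv : prod.lift (𝟙 X) (l.v ≫ prod.snd) ≫ prod.map (l.v ≫ prod.fst) (𝟙 Y) = l.v := by
    ext <;> simp
  have slide := CartLensRel.slide (l.v ≫ prod.fst) (prod.lift (𝟙 X) (l.v ≫ prod.snd)) l.u
  rwa [hv] at slide

theorem CartLensRep.toCon_id (X S : C) : (CartLensRep.id X S).toCon = CartConLens.id X S := by
  simp only [toCon, CartLensRep.id, CartConLens.id, CartConLens.mk.injEq, prod.lift_snd, true_and]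
  -- `simp` cannot apply `prod.map_snd` through the instance for `(CartLensRep.id X S).A ⨯ S`.
  exact (prod.map_snd _ _).trans (Category.comp_id _)

theorem CartLensRep.toCon_comp {Z Q : C} (l : CartLensRep X S Y R) (m : CartLensRep Y R Z Q) :
    (l.comp m).toCon = l.toCon.comp m.toCon := by
  obtain ⟨A, v, u⟩ := l
  obtain ⟨B, w, t⟩ := m
  simp only [comp, toCon, CartConLens.comp, CartConLens.mk.injEq]
  refine ⟨by simp, ?_⟩
  -- Stated over `A ⨯ B` rather than `(l.comp m).A`, whose product instances block `simp`.
  have hmap : prod.map ((v ≫ prod.map (𝟙 A) w ≫ (prod.associator A B Z).inv) ≫ prod.fst) (𝟙 Q) ≫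
        (prod.associator A B Q).hom ≫ prod.map (𝟙 A) t =
      prod.lift prod.fst (prod.map (v ≫ prod.snd) (𝟙 Q) ≫ prod.map (w ≫ prod.fst) (𝟙 Q) ≫ t) ≫
        prod.map (v ≫ prod.fst) (𝟙 R) := by
    ext
    · simp
    · simp [-prod.associator_hom, reassoc_of% prod.associator_hom_snd]
  simpa only [Category.assoc] using hmap =≫ u

end

noncomputable def CartCoendLens.equivConLens (X S Y R : C) :
    CartCoendLens X S Y R ≃ CartConLens X S Y R where
  toFun := Quot.lift CartLensRep.toCon fun _ _ => CartLensRep.toCon_eq_of_rel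
  invFun l := Quot.mk _ l.toRep
  left_inv := Quot.ind fun l => (Quot.sound l.rel_toCon_toRep).symm
  right_inv := CartConLens.toRep_toCon

/-- When the monoidal structure is cartesian, the category of coend lenses is
isomorphic to the category of concrete lenses: both have the same objects
(pairs of objects of `C`), and there are hom-set bijections commuting with
identities and composition. -/
theorem cartesian_coendLens_iso_conLens :
    ∃ e : ∀ X S Y R : C, CartCoendLens X S Y R ≃ CartConLens X S Y R,
      (∀ X S : C, e X S X S (Quot.mk _ (CartLensRep.id X S)) = CartConLens.id X S) ∧
      (∀ (X S Y R Z Q : C) (l : CartLensRep X S Y R) (m : CartLensRep Y R Z Q),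
        e X S Z Q (Quot.mk _ (l.comp m)) =
          (e X S Y R (Quot.mk _ l)).comp (e Y R Z Q (Quot.mk _ m))) :=
  ⟨CartCoendLens.equivConLens, CartLensRep.toCon_id, fun _ _ _ _ _ _ => CartLensRep.toCon_comp⟩
end

section
/- If the monoidal unit I of a symmetric monoidal category C is terminal, then the set of coend-lens states Lens_C(I, (X,S)) = ∫^{A} C(I, A⊗X) × C(A⊗S, I) is in bijection with C(I, X). -/
open CategoryTheory MonoidalCategory

variable {C : Type u} [Category.{v} C] [MonoidalCategory C]

/-- If the monoidal unit `I` is terminal, the set of coend-lens states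
`Lens_C(I,(X,S)) = ∫^A C(I, A⊗X) × C(A⊗S, I)` is in bijection with `C(I, X)`,
via `[A, v, u] ↦ v ≫ (!_A ▷ X) ≫ λ_X`. -/
theorem coendLens_states_equiv (hI : Limits.IsTerminal (𝟙_ C)) (X S : C) :
    ∃ e : CoendLens (𝟙_ C) (𝟙_ C) X S ≃ (𝟙_ C ⟶ X),
      ∀ l : LensRep (𝟙_ C) (𝟙_ C) X S,
        e (Quot.mk _ l) = l.v ≫ (hI.from l.A ▷ X) ≫ (λ_ X).hom := by
  let toFun : CoendLens (𝟙_ C) (𝟙_ C) X S → (𝟙_ C ⟶ X) :=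
    Quot.lift (fun l => l.v ≫ (hI.from l.A ▷ X) ≫ (λ_ X).hom) (by
      rintro _ _ ⟨f, v, u⟩
      simp only
      rw [← Category.assoc, Category.assoc v, ← comp_whiskerRight,
        hI.hom_ext (f ≫ hI.from _) (hI.from _), Category.assoc])
  let invFun : (𝟙_ C ⟶ X) → CoendLens (𝟙_ C) (𝟙_ C) X S :=
    fun g => Quot.mk _ ⟨𝟙_ C, g ≫ (λ_ X).inv, (λ_ S).hom ≫ hI.from S⟩
  refine ⟨⟨toFun, invFun, ?_, ?_⟩, fun l => rfl⟩
  · intro q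
    induction q using Quot.ind with
    | _ l =>
      show Quot.mk _ (⟨𝟙_ C, (l.v ≫ (hI.from l.A ▷ X) ≫ (λ_ X).hom) ≫ (λ_ X).inv,
        (λ_ S).hom ≫ hI.from S⟩ : LensRep (𝟙_ C) (𝟙_ C) X S) = Quot.mk _ l
      have h1 : (l.v ≫ (hI.from l.A ▷ X) ≫ (λ_ X).hom) ≫ (λ_ X).inv
          = l.v ≫ (hI.from l.A ▷ X) := by simp
      rw [h1]
      have := Quot.sound (LensRel.slide (X := 𝟙_ C) (S := 𝟙_ C) (Y := X) (R := S)
        (hI.from l.A) l.v ((λ_ S).hom ≫ hI.from S))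
      rw [this]
      congr 1
      obtain ⟨A, v, u⟩ := l
      congr 1
      exact hI.hom_ext _ _
  · intro g
    show (g ≫ (λ_ X).inv) ≫ (hI.from (𝟙_ C) ▷ X) ≫ (λ_ X).hom = g
    have : hI.from (𝟙_ C) = 𝟙 _ := hI.hom_ext _ _
    simp [this]
end

section
/- For any symmetric monoidal category C for which coend lenses exist, the set of coend-lens effects Lens_C((Y,R), I) is in bijection with C(Y, R), via f ↦ [R, f·(unit coherence), id_R] = [Y, id_Y·(unit coherence), f]. -/
open CategoryTheory MonoidalCategory

variable {C : Type u} [Category.{v} C] [MonoidalCategory C]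

/-- For any symmetric monoidal `C` (for which the coend lenses exist as
quotient sets), the set of coend-lens effects `Lens_C((Y,R), I)` is in
bijection with `C(Y,R)`, via `f ↦ [R, f ≫ ρ⁻¹, ρ]`. -/
theorem coendLens_effects_equiv (C : Type u) [Category.{v} C] [MonoidalCategory C]
    [SymmetricCategory C] (Y R : C) :
    ∃ e : (Y ⟶ R) ≃ CoendLens Y R (𝟙_ C) (𝟙_ C),
      ∀ f : Y ⟶ R,
        e f = Quot.mk _ (⟨R, f ≫ (ρ_ R).inv, (ρ_ R).hom⟩ :
          LensRep Y R (𝟙_ C) (𝟙_ C)) := by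

  refine ⟨{
    toFun := fun f => Quot.mk _ (⟨R, f ≫ (ρ_ R).inv, (ρ_ R).hom⟩ :
      LensRep Y R (𝟙_ C) (𝟙_ C))
    invFun := Quot.lift (fun r => r.v ≫ r.u) ?_
    left_inv := ?_
    right_inv := ?_ }, fun f => rfl⟩
  · rintro _ _ ⟨f, v, u⟩
    simp
  · intro f
    simp
  · intro q
    induction q using Quot.ind with
    | _ r =>
      obtain ⟨A, v, u⟩ := r
      show Quot.mk _ (⟨R, (v ≫ u) ≫ (ρ_ R).inv, (ρ_ R).hom⟩ :
        LensRep Y R (𝟙_ C) (𝟙_ C)) = Quot.mk _ ⟨A, v, u⟩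
      have h := Quot.sound (LensRel.slide ((ρ_ A).inv ≫ u) v (ρ_ R).hom)
      have e1 : v ≫ (((ρ_ A).inv ≫ u) ▷ (𝟙_ C)) = (v ≫ u) ≫ (ρ_ R).inv := by
        simp [← cancel_mono (ρ_ R).hom, comp_whiskerRight, rightUnitor_naturality]
      have e2 : (((ρ_ A).inv ≫ u) ▷ (𝟙_ C)) ≫ (ρ_ R).hom = u := by
        simp [comp_whiskerRight, rightUnitor_naturality]
      rw [e1, e2] at h
      exact h
end
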